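/- If f is ordinally concave on Ξ⁰, then for every target vector b, the set of maximizers of f over {ξ ∈ Ξ⁰ : 0 ≤ ξ ≤ b} is M♮-convex. -/
import Mathlib


/-- `chi j` is the unit vector at `j` for `j = some i`, and the zero vector for `j = none`. -/
def chi {I : Type*} [DecidableEq I] : Option I → I → ℤ
  | none => fun _ => 0
  | some i => fun k => if k = i then 1 else 0

/-- `f` is ordinally concave on the domain `Ξ`. -/
def OrdinallyConcave {I : Type*} [DecidableEq I] (Ξ : Set (I → ℤ)) (f : (I → ℤ) → ℝ) : Prop :=
  ∀ ξ ∈ Ξ, ∀ ξ' ∈ Ξ, ∀ i : I, ξ' i < ξ i →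
    ∃ j : Option I, (∀ k, j = some k → ξ k < ξ' k) ∧
      ξ - chi (some i) + chi j ∈ Ξ ∧ ξ' + chi (some i) - chi j ∈ Ξ ∧
      (f ξ < f (ξ - chi (some i) + chi j) ∨
        f ξ' < f (ξ' + chi (some i) - chi j) ∨
        (f (ξ' + chi (some i) - chi j) = f ξ' ∧ f (ξ - chi (some i) + chi j) = f ξ))

/-- `Ξ` is an M♮-convex set of integer vectors. -/
def MNatConvex {I : Type*} [DecidableEq I] (Ξ : Set (I → ℤ)) : Prop :=
  ∀ ξ ∈ Ξ, ∀ ξ' ∈ Ξ, ∀ i : I, ξ' i < ξ i →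
    ((ξ - chi (some i) ∈ Ξ ∧ ξ' + chi (some i) ∈ Ξ) ∨
      ∃ j : I, ξ j < ξ' j ∧
        ξ - chi (some i) + chi (some j) ∈ Ξ ∧ ξ' + chi (some i) - chi (some j) ∈ Ξ)

/-- if `f` is ordinally concave on a finite domain `Ξ` of nonnegative
integer vectors then, for every target vector `b`, the set of maximizers of `f` over
the box `{ξ ∈ Ξ : 0 ≤ ξ ≤ b}` is M♮-convex. -/
theorem maximizers_MNatConvex_of_ordinallyConcave {I : Type*} [Fintype I] [DecidableEq I]
    (Ξ : Set (I → ℤ)) (hfin : Ξ.Finite) (hpos : ∀ ξ ∈ Ξ, ∀ i, 0 ≤ ξ i)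
    (f : (I → ℤ) → ℝ) (hf : OrdinallyConcave Ξ f) (b : I → ℤ) :
    MNatConvex {ξ | (ξ ∈ Ξ ∧ ∀ i, 0 ≤ ξ i ∧ ξ i ≤ b i) ∧
      ∀ ζ, (ζ ∈ Ξ ∧ ∀ i, 0 ≤ ζ i ∧ ζ i ≤ b i) → f ζ ≤ f ξ} := by
  intro ξ hξ ξ' hξ' i hi
  obtain ⟨⟨hξΞ, hξbox⟩, hξmax⟩ := hξ
  obtain ⟨⟨hξ'Ξ, hξ'box⟩, hξ'max⟩ := hξ'
  obtain ⟨j, hj, hm1, hm2, hcase⟩ := hf ξ hξΞ ξ' hξ'Ξ i hi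
  have hbox1 : ∀ k, 0 ≤ (ξ - chi (some i) + chi j) k ∧ (ξ - chi (some i) + chi j) k ≤ b k := by
    intro k
    refine ⟨hpos _ hm1 k, ?_⟩
    simp only [Pi.add_apply, Pi.sub_apply]
    cases j with
    | none =>
      simp only [chi]
      split_ifs <;> linarith [(hξbox k).2]
    | some l =>
      have hl := hj l rfl
      simp only [chi]
      split_ifs with h1 h2 h2
      · linarith [(hξbox k).2]
      · linarith [(hξbox k).2]
      · subst h2; linarith [hl, (hξ'box k).2]
      · linarith [(hξbox k).2]
  have hbox2 : ∀ k, 0 ≤ (ξ' + chi (some i) - chi j) k ∧ (ξ' + chi (some i) - chi j) k ≤ b k := by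
    intro k
    refine ⟨hpos _ hm2 k, ?_⟩
    simp only [Pi.add_apply, Pi.sub_apply]
    cases j with
    | none =>
      simp only [chi]
      split_ifs with h1
      · subst h1; linarith [hi, (hξbox k).2]
      · linarith [(hξ'box k).2]
    | some l =>
      simp only [chi]
      split_ifs with h1 h2 h2
      · linarith [(hξ'box k).2]
      · subst h1; linarith [hi, (hξbox k).2]
      · linarith [(hξ'box k).2]
      · linarith [(hξ'box k).2]
  have hle1 : f (ξ - chi (some i) + chi j) ≤ f ξ := hξmax _ ⟨hm1, hbox1⟩
  have hle2 : f (ξ' + chi (some i) - chi j) ≤ f ξ' := hξ'max _ ⟨hm2, hbox2⟩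
  have heq : f (ξ' + chi (some i) - chi j) = f ξ' ∧ f (ξ - chi (some i) + chi j) = f ξ := by
    rcases hcase with h | h | h
    · linarith
    · linarith
    · exact h
  have hmax1 : ∀ ζ, (ζ ∈ Ξ ∧ ∀ k, 0 ≤ ζ k ∧ ζ k ≤ b k) → f ζ ≤ f (ξ - chi (some i) + chi j) := by
    intro ζ hζ; rw [heq.2]; exact hξmax ζ hζ
  have hmax2 : ∀ ζ, (ζ ∈ Ξ ∧ ∀ k, 0 ≤ ζ k ∧ ζ k ≤ b k) → f ζ ≤ f (ξ' + chi (some i) - chi j) := by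
    intro ζ hζ; rw [heq.1]; exact hξ'max ζ hζ
  cases j with
  | none =>
    left
    have e1 : ξ - chi (some i) + chi (none : Option I) = ξ - chi (some i) := by
      funext k; simp [chi]
    have e2 : ξ' + chi (some i) - chi (none : Option I) = ξ' + chi (some i) := by
      funext k; simp [chi]
    rw [e1] at hm1 hbox1 hmax1
    rw [e2] at hm2 hbox2 hmax2
    exact ⟨⟨⟨hm1, hbox1⟩, hmax1⟩, ⟨⟨hm2, hbox2⟩, hmax2⟩⟩
  | some l =>
    right
    exact ⟨l, hj l rfl, ⟨⟨hm1, hbox1⟩, hmax1⟩, ⟨⟨hm2, hbox2⟩, hmax2⟩⟩
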